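/- arXiv:1610.06054 — 2 statements merged into one kernel-verified Lean document; each statement's English description precedes it below -/
import Mathlib

section
/- Let $r,H>0$ and define $A_E(m,n) = 2mnr\sin(\pi/n)\sqrt{(H/m)^2+r^2(1-\cos(\pi/n))^2}$ for positive integers $m,n$. Then for sequences $m_k, n_k \to \infty$, $A_E(m_k,n_k) \to 2\pi r H$ if and only if $m_k/n_k^2 \to 0$. -/
/-!
For `m > 0` the area factors as
`A_E(m,n) = √(H² + (r m (1 - cos(π/n)))²) · 2r · n sin(π/n)`.
Since `n sin(π/n) → π` and `n² (1 - cos(π/n)) → π²/2` are nonzero limits, `A_E → 2πrH` iff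
`r m (1 - cos(π/n)) → 0`, i.e. iff `m / n² → 0`.
-/

open Real Filter Topology

lemma mul_sin_div_eq_mul_sinc (c x : ℝ) (hx : x ≠ 0) : x * sin (c / x) = c * sinc (c / x) := by
  rcases eq_or_ne c 0 with rfl | hc
  · simp
  · rw [sinc_of_ne_zero (div_ne_zero hc hx)]
    field_simp

lemma tendsto_mul_sin_div_atTop (c : ℝ) :
    Tendsto (fun x : ℝ => x * sin (c / x)) atTop (𝓝 c) := by
  have hsinc : Tendsto (fun x : ℝ => c * sinc (c / x)) atTop (𝓝 (c * sinc 0)) :=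
    ((continuous_sinc.tendsto 0).comp (tendsto_const_nhds.div_atTop tendsto_id)).const_mul c
  rw [sinc_zero, mul_one] at hsinc
  refine hsinc.congr' ?_
  filter_upwards [eventually_ne_atTop 0] with x hx
  exact (mul_sin_div_eq_mul_sinc c x hx).symm

lemma one_sub_cos_eq_two_mul_sin_half_sq (y : ℝ) : 1 - cos y = 2 * sin (y / 2) ^ 2 := by
  have hcos := cos_two_mul (y / 2)
  rw [mul_div_cancel₀ y two_ne_zero] at hcos
  linarith [cos_sq_add_sin_sq (y / 2)]

lemma tendsto_sq_mul_one_sub_cos_div_atTop (c : ℝ) :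
    Tendsto (fun x : ℝ => x ^ 2 * (1 - cos (c / x))) atTop (𝓝 (c ^ 2 / 2)) := by
  have h := ((tendsto_mul_sin_div_atTop (c / 2)).pow 2).const_mul 2
  convert h using 2 with x
  · rw [one_sub_cos_eq_two_mul_sin_half_sq, div_right_comm]
    ring
  · ring

lemma tendsto_sqrt_sq_add_sq_iff {α : Type*} {l : Filter α} {v : α → ℝ} {H : ℝ} (hH : 0 ≤ H) :
    Tendsto (fun k => √(H ^ 2 + v k ^ 2)) l (𝓝 H) ↔ Tendsto v l (𝓝 0) := by
  refine ⟨fun h => ?_, fun h => ?_⟩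
  · have hsq : Tendsto (fun k => v k ^ 2) l (𝓝 0) := by
      have := (h.pow 2).sub_const (H ^ 2)
      rw [sub_self] at this
      refine this.congr fun k => ?_
      rw [sq_sqrt (by positivity)]
      ring
    rw [tendsto_zero_iff_abs_tendsto_zero]
    have := hsq.sqrt
    simp only [sqrt_sq_eq_abs, sqrt_zero] at this
    exact this
  · have := ((h.pow 2).const_add (H ^ 2)).sqrt
    rwa [zero_pow two_ne_zero, add_zero, sqrt_sq hH] at this

lemma mul_sqrt_div_sq_add_sq {m : ℝ} (hm : 0 < m) (H a : ℝ) :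
    m * √((H / m) ^ 2 + a ^ 2) = √(H ^ 2 + (m * a) ^ 2) := by
  nth_rewrite 1 [← sqrt_sq hm.le]
  rw [← sqrt_mul (sq_nonneg m)]
  congr 1
  field_simp

/-- For Schwarz's lantern with areas
`A_E(m,n) = 2*m*n*r*sin(π/n)*√((H/m)² + r²(1-cos(π/n))²)` and sequences `m_k, n_k → ∞`,
`A_E(m_k, n_k) → 2πrH` if and only if `m_k / n_k² → 0`. -/
theorem schwarz_lantern_limit (r H : ℝ) (hr : 0 < r) (hH : 0 < H)
    (m n : ℕ → ℕ)
    (hm : Tendsto (fun k => m k) atTop atTop) (hn : Tendsto (fun k => n k) atTop atTop) :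
    Tendsto (fun k => 2 * (m k : ℝ) * (n k : ℝ) * r * Real.sin (π / (n k : ℝ)) *
        Real.sqrt ((H / (m k : ℝ)) ^ 2 + r ^ 2 * (1 - Real.cos (π / (n k : ℝ))) ^ 2))
      atTop (nhds (2 * π * r * H)) ↔
    Tendsto (fun k => (m k : ℝ) / (n k : ℝ) ^ 2) atTop (nhds 0) := by
  have hnR : Tendsto (fun k => (n k : ℝ)) atTop atTop := tendsto_natCast_atTop_atTop.comp hn
  have hsin : Tendsto (fun k => 2 * r * (n k * sin (π / n k))) atTop (𝓝 (2 * r * π)) :=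
    ((tendsto_mul_sin_div_atTop π).comp hnR).const_mul (2 * r)
  have hcos : Tendsto (fun k => r * (n k ^ 2 * (1 - cos (π / n k)))) atTop
      (𝓝 (r * (π ^ 2 / 2))) :=
    ((tendsto_sq_mul_one_sub_cos_div_atTop π).comp hnR).const_mul r
  have harea : ∀ᶠ k in atTop,
      2 * (m k : ℝ) * n k * r * sin (π / n k) * √((H / m k) ^ 2 + r ^ 2 * (1 - cos (π / n k)) ^ 2)
        = √(H ^ 2 + ((m k : ℝ) / n k ^ 2 * (r * (n k ^ 2 * (1 - cos (π / n k))))) ^ 2)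
          * (2 * r * (n k * sin (π / n k))) := by
    filter_upwards [hm.eventually_gt_atTop 0, hn.eventually_gt_atTop 0] with k hmk hnk
    have hmk' : (0 : ℝ) < m k := by exact_mod_cast hmk
    have hnk' : (n k : ℝ) ≠ 0 := by positivity
    rw [show (m k : ℝ) / n k ^ 2 * (r * (n k ^ 2 * (1 - cos (π / n k))))
        = m k * (r * (1 - cos (π / n k))) by field_simp, ← mul_sqrt_div_sq_add_sq hmk', mul_pow]
    ring
  have hlimit := tendsto_mul_iff_of_ne_zero (f := fun k => (m k : ℝ) / n k ^ 2) (x := 0) hcos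
    (by positivity)
  rw [zero_mul] at hlimit
  rw [tendsto_congr' harea, show 2 * π * r * H = H * (2 * r * π) by ring,
    tendsto_mul_iff_of_ne_zero hsin (by positivity), tendsto_sqrt_sq_add_sq_iff hH.le]
  exact hlimit
end

section
/- There is a constant $C=C(p)$ independent of the geometry of the triangle such that for any triangle $K$ with diameter $h_K$ and any $v\in W^{2,p}(K)$, the Crouzeix–Raviart interpolation error satisfies $|v-\mathcal{I}_K^{CR}v|_{1,p,K}\le C h_K |v|_{2,p,K}$. -/
/-!
The gradient of the Crouzeix–Raviart interpolant is the mean of `∇v` over `K`, so the error is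
`∇v` minus its mean, and it suffices to prove a Poincaré–Wirtinger inequality for each first
derivative `∂ᵢv`. On a convex body `K ⊆ ℝᵈ` this holds with the constant `2ᵈ · diam K`, whatever
the shape of `K`: write `u x - ⨍ u` as the mean over `y ∈ K` of `u x - u y`, and `u x - u y` as the
integral of `∇u` along the segment `[x, y]`. Jensen's inequality reduces the `Lᵖ` bound to the
double integral of `‖∇u‖ᵖ` at `(1 - t) • x + t • y` over `x, y ∈ K`; substituting in whichever of
`x`, `y` has coefficient at least `1/2` maps `K` into `K` and shrinks volumes by a factor at most
`2ᵈ`. Finally `‖∇(∂ᵢv)‖` is bounded by the `ℓᵖ` norm of `(∂₁₁v, ∂₁₂v, ∂₂₂v)` thanks to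
`∂₂∂₁v = ∂₁∂₂v`.
-/

open MeasureTheory ENNReal NNReal Set Module

theorem rpow_lintegral_le_measure_univ_rpow_mul {α : Type*} [MeasurableSpace α] (ν : Measure α)
    {h : α → ℝ≥0∞} (hh : AEMeasurable h ν) {q : ℝ} (hq : 1 ≤ q) :
    (∫⁻ a, h a ∂ν) ^ q ≤ ν univ ^ (q - 1) * ∫⁻ a, h a ^ q ∂ν := by
  rcases hq.eq_or_lt with rfl | hq1
  · simp
  have hq0 : 0 < q := by linarith
  have hHolder := ENNReal.lintegral_mul_le_Lp_mul_Lq ν (Real.HolderConjugate.conjExponent hq1)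
    hh (aemeasurable_const (b := (1 : ℝ≥0∞)))
  simp only [Pi.mul_apply, mul_one, ENNReal.one_rpow, lintegral_const, one_mul] at hHolder
  calc (∫⁻ a, h a ∂ν) ^ q
      ≤ ((∫⁻ a, h a ^ q ∂ν) ^ (1 / q) * ν univ ^ (1 / q.conjExponent)) ^ q := by gcongr
    _ = ν univ ^ (q - 1) * ∫⁻ a, h a ^ q ∂ν := by
      rw [ENNReal.mul_rpow_of_nonneg _ _ hq0.le, ← ENNReal.rpow_mul, ← ENNReal.rpow_mul,
        one_div_mul_cancel hq0.ne', ENNReal.rpow_one, mul_comm, Real.conjExponent]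
      congr 2
      field_simp

theorem enorm_setAverage_rpow_le {α F : Type*} [MeasurableSpace α] [NormedAddCommGroup F]
    [NormedSpace ℝ F] {μ : Measure α} {K : Set α} (h0 : μ K ≠ 0) (hfin : μ K ≠ ∞) {f : α → F}
    (hf : AEStronglyMeasurable f (μ.restrict K)) {q : ℝ} (hq : 1 ≤ q) :
    ‖⨍ y in K, f y ∂μ‖ₑ ^ q ≤ (μ K)⁻¹ * ∫⁻ y in K, ‖f y‖ₑ ^ q ∂μ := by
  have hq0 : 0 < q := by linarith
  have hmean : ‖⨍ y in K, f y ∂μ‖ₑ ≤ (μ K)⁻¹ * ∫⁻ y in K, ‖f y‖ₑ ∂μ := by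
    rw [setAverage_eq']
    exact (enorm_integral_le_lintegral_enorm _).trans_eq (lintegral_smul_measure _ _)
  have hjensen := rpow_lintegral_le_measure_univ_rpow_mul (μ.restrict K) hf.enorm hq
  rw [Measure.restrict_apply_univ] at hjensen
  calc ‖⨍ y in K, f y ∂μ‖ₑ ^ q
      ≤ (μ K)⁻¹ ^ q * (∫⁻ y in K, ‖f y‖ₑ ∂μ) ^ q := by
        rw [← ENNReal.mul_rpow_of_nonneg _ _ hq0.le]; gcongr
    _ ≤ (μ K)⁻¹ ^ q * (μ K ^ (q - 1) * ∫⁻ y in K, ‖f y‖ₑ ^ q ∂μ) := by gcongr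
    _ = (μ K)⁻¹ * ∫⁻ y in K, ‖f y‖ₑ ^ q ∂μ := by
      rw [← mul_assoc, ENNReal.inv_rpow, ENNReal.rpow_sub _ _ h0 hfin, ENNReal.rpow_one,
        div_eq_mul_inv, ← mul_assoc, ENNReal.inv_mul_cancel, one_mul]
      · simp [ENNReal.rpow_eq_zero_iff, h0, hfin, hq0]
      · exact ENNReal.rpow_ne_top_of_nonneg hq0.le hfin

theorem sub_setAverage_eq_setAverage_sub {α F : Type*} [MeasurableSpace α]
    [NormedAddCommGroup F] [NormedSpace ℝ F] [CompleteSpace F] {μ : Measure α} {K : Set α}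
    (h0 : μ K ≠ 0) (hfin : μ K ≠ ∞) {u : α → F} (hu : IntegrableOn u K μ) (c : F) :
    c - ⨍ y in K, u y ∂μ = ⨍ y in K, (c - u y) ∂μ := by
  have hK : μ.real K ≠ 0 := (ENNReal.toReal_pos h0 hfin).ne'
  have : IsFiniteMeasure (μ.restrict K) := isFiniteMeasure_restrict.2 hfin
  rw [setAverage_eq, setAverage_eq, integral_sub (integrable_const c) hu, setIntegral_const,
    smul_sub, inv_smul_smul₀ hK]

variable {E : Type*} [NormedAddCommGroup E] [NormedSpace ℝ E]

theorem enorm_sub_le_lintegral_enorm_fderiv {U : Set E} (hU : IsOpen U) {u : E → ℝ}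
    (hu : ContDiffOn ℝ 1 u U) {x y : E} (hxy : segment ℝ x y ⊆ U) :
    ‖u y - u x‖ₑ ≤ (∫⁻ t in Ioc (0 : ℝ) 1, ‖fderiv ℝ u ((1 - t) • x + t • y)‖ₑ) * ‖y - x‖ₑ := by
  set γ : ℝ → E := fun t => (1 - t) • x + t • y
  have hγU : ∀ t ∈ Icc (0 : ℝ) 1, γ t ∈ U := fun t ht =>
    hxy (segment_eq_image ℝ x y ▸ mem_image_of_mem _ ht)
  have hγ : ∀ t, HasDerivAt γ (y - x) t := fun t => by
    have := (((hasDerivAt_id t).const_sub 1).smul_const x).fun_add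
      ((hasDerivAt_id t).smul_const y)
    rwa [neg_one_smul, one_smul, neg_add_eq_sub] at this
  have hderiv : ∀ t ∈ uIcc (0 : ℝ) 1, HasDerivAt (u ∘ γ) (fderiv ℝ u (γ t) (y - x)) t := by
    intro t ht
    rw [uIcc_of_le zero_le_one] at ht
    exact ((hu.contDiffAt (hU.mem_nhds (hγU t ht))).differentiableAt one_ne_zero).hasFDerivAt
      |>.comp_hasDerivAt t (hγ t)
  have hcont : ContinuousOn (fun t => fderiv ℝ u (γ t) (y - x)) (uIcc 0 1) := by
    rw [uIcc_of_le zero_le_one]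
    exact ((hu.continuousOn_fderiv_of_isOpen hU le_rfl).comp
      (fun t _ => (hγ t).continuousAt.continuousWithinAt) hγU).clm_apply continuousOn_const
  have hftc := intervalIntegral.integral_eq_sub_of_hasDerivAt hderiv hcont.intervalIntegrable
  simp only [Function.comp_apply, γ, sub_zero, zero_smul, one_smul, zero_add, sub_self,
    add_zero] at hftc
  calc ‖u y - u x‖ₑ = ‖∫ t in Ioc (0 : ℝ) 1, fderiv ℝ u (γ t) (y - x)‖ₑ := by
        rw [← intervalIntegral.integral_of_le zero_le_one, hftc]
    _ ≤ ∫⁻ t in Ioc (0 : ℝ) 1, ‖fderiv ℝ u (γ t) (y - x)‖ₑ := enorm_integral_le_lintegral_enorm _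
    _ ≤ ∫⁻ t in Ioc (0 : ℝ) 1, ‖fderiv ℝ u (γ t)‖ₑ * ‖y - x‖ₑ :=
        lintegral_mono fun t => ContinuousLinearMap.le_opENorm _ _
    _ = (∫⁻ t in Ioc (0 : ℝ) 1, ‖fderiv ℝ u (γ t)‖ₑ) * ‖y - x‖ₑ :=
        lintegral_mul_const' _ _ enorm_ne_top

theorem enorm_sub_rpow_le_lintegral_enorm_fderiv_rpow {U : Set E} (hU : IsOpen U) {u : E → ℝ}
    (hu : ContDiffOn ℝ 1 u U) {x y : E} (hxy : segment ℝ x y ⊆ U) {q : ℝ} (hq : 1 ≤ q) :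
    ‖u y - u x‖ₑ ^ q
      ≤ ‖y - x‖ₑ ^ q * ∫⁻ t in Ioc (0 : ℝ) 1, ‖fderiv ℝ u ((1 - t) • x + t • y)‖ₑ ^ q := by
  have hγ : Continuous fun t : ℝ => (1 - t) • x + t • y := by fun_prop
  have hmeas : AEMeasurable (fun t : ℝ => ‖fderiv ℝ u ((1 - t) • x + t • y)‖ₑ)
      (volume.restrict (Icc 0 1)) :=
    ((hu.continuousOn_fderiv_of_isOpen hU le_rfl).comp hγ.continuousOn fun t ht =>
      hxy (segment_eq_image ℝ x y ▸ mem_image_of_mem _ ht)).enorm.aemeasurable measurableSet_Icc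
  have hjensen := rpow_lintegral_le_measure_univ_rpow_mul _
    (hmeas.mono_measure (Measure.restrict_mono Ioc_subset_Icc_self le_rfl)) hq
  simp only [Measure.restrict_apply_univ, Real.volume_Ioc, sub_zero, ENNReal.ofReal_one,
    ENNReal.one_rpow, one_mul] at hjensen
  calc ‖u y - u x‖ₑ ^ q
      ≤ ((∫⁻ t in Ioc (0 : ℝ) 1, ‖fderiv ℝ u ((1 - t) • x + t • y)‖ₑ) * ‖y - x‖ₑ) ^ q := by
        gcongr
        exact enorm_sub_le_lintegral_enorm_fderiv hU hu hxy
    _ ≤ ‖y - x‖ₑ ^ q * ∫⁻ t in Ioc (0 : ℝ) 1, ‖fderiv ℝ u ((1 - t) • x + t • y)‖ₑ ^ q := by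
        rw [ENNReal.mul_rpow_of_nonneg _ _ (by linarith), mul_comm]
        gcongr

section Haar

variable [FiniteDimensional ℝ E] [MeasurableSpace E] [BorelSpace E] (μ : Measure E)
  [μ.IsAddHaarMeasure]

theorem lintegral_comp_smul_add {G : E → ℝ≥0∞} (hG : Measurable G) {c : ℝ} (hc : c ≠ 0) (b : E) :
    ∫⁻ z, G (c • z + b) ∂μ = ENNReal.ofReal |(c ^ finrank ℝ E)⁻¹| * ∫⁻ z, G z ∂μ := by
  have hmap : Measure.map (fun z => c • z + b) μ = ENNReal.ofReal |(c ^ finrank ℝ E)⁻¹| • μ := by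
    rw [show (fun z : E => c • z + b) = (· + b) ∘ (c • ·) from rfl,
      ← Measure.map_map (measurable_add_const b) (measurable_const_smul c),
      Measure.map_addHaar_smul μ hc, Measure.map_smul, map_add_right_eq_self]
  rw [← lintegral_map hG (by fun_prop), hmap, lintegral_smul_measure, smul_eq_mul]

theorem setLIntegral_comp_smul_add_le {K : Set E} (hK : MeasurableSet K) {G : E → ℝ≥0∞}
    (hG : Measurable G) {c : ℝ} (hc : 0 < c) {b : E} (hKb : MapsTo (fun y => c • y + b) K K) :
    ∫⁻ y in K, G (c • y + b) ∂μ ≤ ENNReal.ofReal (c ^ finrank ℝ E)⁻¹ * ∫⁻ y in K, G y ∂μ :=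
  calc ∫⁻ y in K, G (c • y + b) ∂μ = ∫⁻ y in K, K.indicator G (c • y + b) ∂μ :=
        setLIntegral_congr_fun hK fun y hy => (indicator_of_mem (hKb hy) G).symm
    _ ≤ ∫⁻ y, K.indicator G (c • y + b) ∂μ := setLIntegral_le_lintegral _ _
    _ = ENNReal.ofReal (c ^ finrank ℝ E)⁻¹ * ∫⁻ y in K, G y ∂μ := by
      rw [lintegral_comp_smul_add μ (hG.indicator hK) hc.ne', lintegral_indicator hK,
        abs_of_pos (by positivity)]

theorem ae_restrict_comp_smul_add {K : Set E} (hK : MeasurableSet K) {c : ℝ} (hc : c ≠ 0) {b : E}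
    (hKb : MapsTo (fun y => c • y + b) K K) {P : E → Prop} (hP : ∀ᵐ z ∂μ.restrict K, P z) :
    ∀ᵐ y ∂μ.restrict K, P (c • y + b) := by
  have hqmp : Measure.QuasiMeasurePreserving (fun y => c • y + b) μ μ :=
    (measurePreserving_add_right μ b).quasiMeasurePreserving.comp
      (Measure.quasiMeasurePreserving_smul μ hc)
  rw [ae_restrict_iff' hK] at hP ⊢
  filter_upwards [hqmp.ae hP] with y hy hyK using hy (hKb hyK)

theorem lintegral_lintegral_comp_lineMap_le {K : Set E} (hK : Convex ℝ K) (hKm : MeasurableSet K)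
    {G : E → ℝ≥0∞} (hG : Measurable G) {t : ℝ} (ht : t ∈ Icc (0 : ℝ) 1) :
    ∫⁻ x in K, ∫⁻ y in K, G ((1 - t) • x + t • y) ∂μ ∂μ
      ≤ 2 ^ finrank ℝ E * μ K * ∫⁻ z in K, G z ∂μ := by
  have hhalf : ∀ s r : ℝ, 1 / 2 ≤ s → 0 ≤ r → s + r = 1 →
      ∫⁻ w in K, ∫⁻ y in K, G (s • y + r • w) ∂μ ∂μ
        ≤ 2 ^ finrank ℝ E * μ K * ∫⁻ z in K, G z ∂μ := by
    intro s r hs₁ hr hsr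
    have hs₀ : 0 < s := by linarith
    have hinv : ENNReal.ofReal (s ^ finrank ℝ E)⁻¹ ≤ 2 ^ finrank ℝ E := by
      rw [← inv_pow, ENNReal.ofReal_pow (by positivity)]
      gcongr
      refine ENNReal.ofReal_le_of_le_toReal ?_
      rw [ENNReal.toReal_ofNat, inv_le_comm₀ hs₀ two_pos]
      linarith
    calc ∫⁻ w in K, ∫⁻ y in K, G (s • y + r • w) ∂μ ∂μ
        ≤ ∫⁻ _ in K, 2 ^ finrank ℝ E * ∫⁻ z in K, G z ∂μ ∂μ := by
          refine setLIntegral_mono' hKm fun w hw => ?_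
          refine (setLIntegral_comp_smul_add_le μ hKm hG hs₀ fun y hy => ?_).trans (by gcongr)
          exact hK hy hw hs₀.le hr hsr
      _ = 2 ^ finrank ℝ E * μ K * ∫⁻ z in K, G z ∂μ := by rw [setLIntegral_const]; ring
  rcases le_total (1 / 2) t with h | h
  · simpa only [add_comm] using hhalf t (1 - t) h (by linarith [ht.2]) (by ring)
  · have hmeas : Measurable fun p : E × E => G ((1 - t) • p.1 + t • p.2) :=
      hG.comp (by fun_prop)
    rw [lintegral_lintegral_swap hmeas.aemeasurable]
    exact hhalf (1 - t) t (by linarith) ht.1 (by ring)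

variable {μ} {K U : Set E} {u : E → ℝ}

theorem enorm_sub_setAverage_rpow_le_lintegral_fderiv (hK : Convex ℝ K) (hKc : IsCompact K)
    (h0 : μ K ≠ 0) (hU : IsOpen U) (hKU : K ⊆ U) (hu : ContDiffOn ℝ 1 u U) {q : ℝ} (hq : 1 ≤ q)
    {x : E} (hx : x ∈ K) :
    ‖u x - ⨍ y in K, u y ∂μ‖ₑ ^ q ≤ (μ K)⁻¹ * ENNReal.ofReal (Metric.diam K) ^ q *
      ∫⁻ t in Ioc (0 : ℝ) 1, ∫⁻ y in K, ‖fderiv ℝ u ((1 - t) • x + t • y)‖ₑ ^ q ∂μ := by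
  set D := ENNReal.ofReal (Metric.diam K)
  have hq0 : 0 < q := by linarith
  have hfin : μ K ≠ ∞ := hKc.measure_lt_top.ne
  have hint : IntegrableOn u K μ := (hu.continuousOn.mono hKU).integrableOn_compact hKc
  have hseg : ∀ y ∈ K, ‖u x - u y‖ₑ ^ q
      ≤ D ^ q * ∫⁻ t in Ioc (0 : ℝ) 1, ‖fderiv ℝ u ((1 - t) • x + t • y)‖ₑ ^ q := by
    intro y hy
    rw [enorm_sub_rev]
    refine (enorm_sub_rpow_le_lintegral_enorm_fderiv_rpow hU hu
      ((hK.segment_subset hx hy).trans hKU) hq).trans ?_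
    gcongr
    rw [← edist_eq_enorm_sub, edist_dist]
    exact ENNReal.ofReal_le_ofReal (Metric.dist_le_diam_of_mem hKc.isBounded hy hx)
  have hswap : Measurable fun p : E × ℝ => ‖fderiv ℝ u ((1 - p.2) • x + p.2 • p.1)‖ₑ ^ q :=
    ((measurable_fderiv ℝ u).enorm.pow_const q).comp (by fun_prop)
  calc ‖u x - ⨍ y in K, u y ∂μ‖ₑ ^ q = ‖⨍ y in K, (u x - u y) ∂μ‖ₑ ^ q := by
        rw [sub_setAverage_eq_setAverage_sub h0 hfin hint]
    _ ≤ (μ K)⁻¹ * ∫⁻ y in K, ‖u x - u y‖ₑ ^ q ∂μ :=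
        enorm_setAverage_rpow_le h0 hfin
          (aestronglyMeasurable_const.sub hint.aestronglyMeasurable) hq
    _ ≤ (μ K)⁻¹ * ∫⁻ y in K,
          (D ^ q * ∫⁻ t in Ioc (0 : ℝ) 1, ‖fderiv ℝ u ((1 - t) • x + t • y)‖ₑ ^ q) ∂μ := by
        gcongr (μ K)⁻¹ * ?_
        exact setLIntegral_mono' hKc.measurableSet hseg
    _ = (μ K)⁻¹ * D ^ q *
          ∫⁻ t in Ioc (0 : ℝ) 1, ∫⁻ y in K, ‖fderiv ℝ u ((1 - t) • x + t • y)‖ₑ ^ q ∂μ := by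
        rw [lintegral_const_mul' _ _ (ENNReal.rpow_ne_top_of_nonneg hq0.le ENNReal.ofReal_ne_top),
          lintegral_lintegral_swap hswap.aemeasurable, mul_assoc]

theorem setLIntegral_enorm_sub_setAverage_rpow_le (hK : Convex ℝ K) (hKc : IsCompact K)
    (h0 : μ K ≠ 0) (hU : IsOpen U) (hKU : K ⊆ U) (hu : ContDiffOn ℝ 1 u U) {q : ℝ}
    (hq : 1 ≤ q) :
    ∫⁻ x in K, ‖u x - ⨍ y in K, u y ∂μ‖ₑ ^ q ∂μ
      ≤ 2 ^ finrank ℝ E * ENNReal.ofReal (Metric.diam K) ^ q *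
          ∫⁻ z in K, ‖fderiv ℝ u z‖ₑ ^ q ∂μ := by
  set D := ENNReal.ofReal (Metric.diam K)
  set G : E → ℝ≥0∞ := fun z => ‖fderiv ℝ u z‖ₑ ^ q
  have hG : Measurable G := (measurable_fderiv ℝ u).enorm.pow_const q
  have hKm : MeasurableSet K := hKc.measurableSet
  have hconst : (μ K)⁻¹ * D ^ q ≠ ∞ :=
    ENNReal.mul_ne_top (ENNReal.inv_ne_top.2 h0)
      (ENNReal.rpow_ne_top_of_nonneg (by linarith) ENNReal.ofReal_ne_top)
  have hswap : Measurable fun p : E × ℝ => ∫⁻ y in K, G ((1 - p.2) • p.1 + p.2 • y) ∂μ :=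
    (hG.comp (f := fun p : (E × ℝ) × E => (1 - p.1.2) • p.1.1 + p.1.2 • p.2)
      (by fun_prop)).lintegral_prod_right'
  calc ∫⁻ x in K, ‖u x - ⨍ y in K, u y ∂μ‖ₑ ^ q ∂μ
      ≤ ∫⁻ x in K, ((μ K)⁻¹ * D ^ q *
          ∫⁻ t in Ioc (0 : ℝ) 1, ∫⁻ y in K, G ((1 - t) • x + t • y) ∂μ) ∂μ :=
        setLIntegral_mono' hKm fun x hx =>
          enorm_sub_setAverage_rpow_le_lintegral_fderiv hK hKc h0 hU hKU hu hq hx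
    _ = (μ K)⁻¹ * D ^ q *
          ∫⁻ t in Ioc (0 : ℝ) 1, ∫⁻ x in K, ∫⁻ y in K, G ((1 - t) • x + t • y) ∂μ ∂μ := by
        rw [lintegral_const_mul' _ _ hconst, lintegral_lintegral_swap hswap.aemeasurable]
    _ ≤ (μ K)⁻¹ * D ^ q * ∫⁻ t in Ioc (0 : ℝ) 1, 2 ^ finrank ℝ E * μ K * ∫⁻ z in K, G z ∂μ := by
        gcongr _ * ?_
        exact setLIntegral_mono' measurableSet_Ioc fun t ht =>
          lintegral_lintegral_comp_lineMap_le μ hK hKm hG (Ioc_subset_Icc_self ht)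
    _ = 2 ^ finrank ℝ E * D ^ q * ∫⁻ z in K, G z ∂μ := by
        rw [setLIntegral_const, Real.volume_Ioc, sub_zero, ENNReal.ofReal_one, mul_one,
          mul_comm (2 ^ finrank ℝ E) (μ K)]
        calc (μ K)⁻¹ * D ^ q * (μ K * 2 ^ finrank ℝ E * ∫⁻ z in K, G z ∂μ)
            = ((μ K)⁻¹ * μ K) * (2 ^ finrank ℝ E * D ^ q * ∫⁻ z in K, G z ∂μ) := by ring
          _ = _ := by rw [ENNReal.inv_mul_cancel h0 hKc.measure_lt_top.ne, one_mul]

theorem enorm_sub_setAverage_le_mul_essSup (hK : Convex ℝ K) (hKc : IsCompact K)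
    (h0 : μ K ≠ 0) (hU : IsOpen U) (hKU : K ⊆ U) (hu : ContDiffOn ℝ 1 u U) {x : E}
    (hx : x ∈ K) :
    ‖u x - ⨍ y in K, u y ∂μ‖ₑ
      ≤ ENNReal.ofReal (Metric.diam K) * essSup (fun z => ‖fderiv ℝ u z‖ₑ) (μ.restrict K) := by
  set D := ENNReal.ofReal (Metric.diam K)
  set S := essSup (fun z => ‖fderiv ℝ u z‖ₑ) (μ.restrict K)
  have hS : ∀ t ∈ Ioc (0 : ℝ) 1,
      ∫⁻ y in K, ‖fderiv ℝ u ((1 - t) • x + t • y)‖ₑ ∂μ ≤ ∫⁻ _ in K, S ∂μ := by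
    intro t ht
    have hKt : MapsTo (fun y => t • y + (1 - t) • x) K K := fun y hy =>
      hK hy hx ht.1.le (by linarith [ht.2]) (by ring)
    refine lintegral_mono_ae ?_
    filter_upwards [ae_restrict_comp_smul_add μ hKc.measurableSet ht.1.ne' hKt
      (ae_le_essSup (fun z => ‖fderiv ℝ u z‖ₑ))] with y hy
    rwa [add_comm]
  have hpt := enorm_sub_setAverage_rpow_le_lintegral_fderiv hK hKc h0 hU hKU hu le_rfl hx
  simp only [ENNReal.rpow_one] at hpt
  calc ‖u x - ⨍ y in K, u y ∂μ‖ₑ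
      ≤ (μ K)⁻¹ * D * ∫⁻ t in Ioc (0 : ℝ) 1, ∫⁻ y in K, ‖fderiv ℝ u ((1 - t) • x + t • y)‖ₑ ∂μ :=
        hpt
    _ ≤ (μ K)⁻¹ * D * ∫⁻ t in Ioc (0 : ℝ) 1, ∫⁻ _ in K, S ∂μ := by
        gcongr _ * ?_
        exact setLIntegral_mono' measurableSet_Ioc hS
    _ = D * S := by
        rw [setLIntegral_const, setLIntegral_const, Real.volume_Ioc, sub_zero, ENNReal.ofReal_one,
          mul_one]
        calc (μ K)⁻¹ * D * (S * μ K) = ((μ K)⁻¹ * μ K) * (D * S) := by ring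
          _ = D * S := by rw [ENNReal.inv_mul_cancel h0 hKc.measure_lt_top.ne, one_mul]

theorem eLpNorm_sub_setAverage_le (hK : Convex ℝ K) (hKc : IsCompact K) (hU : IsOpen U)
    (hKU : K ⊆ U) (hu : ContDiffOn ℝ 1 u U) {p : ℝ≥0∞} (hp : 1 ≤ p) :
    eLpNorm (fun x => u x - ⨍ y in K, u y ∂μ) p (μ.restrict K)
      ≤ 2 ^ finrank ℝ E * ENNReal.ofReal (Metric.diam K) *
          eLpNorm (fderiv ℝ u) p (μ.restrict K) := by
  set D := ENNReal.ofReal (Metric.diam K)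
  rcases eq_or_ne (μ K) 0 with h0 | h0
  · simp [Measure.restrict_eq_zero.2 h0]
  rcases eq_or_ne p ∞ with rfl | hp_top
  · rw [eLpNorm_exponent_top, eLpNorm_exponent_top, eLpNormEssSup, eLpNormEssSup]
    refine essSup_le_of_ae_le _
      ((ae_restrict_iff' hKc.measurableSet).2 (ae_of_all _ fun x hx => ?_))
    calc ‖u x - ⨍ y in K, u y ∂μ‖ₑ
        ≤ D * essSup (fun z => ‖fderiv ℝ u z‖ₑ) (μ.restrict K) :=
          enorm_sub_setAverage_le_mul_essSup hK hKc h0 hU hKU hu hx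
      _ ≤ 2 ^ finrank ℝ E * D * essSup (fun z => ‖fderiv ℝ u z‖ₑ) (μ.restrict K) := by
          rw [mul_assoc]
          exact le_mul_of_one_le_left' (one_le_pow₀ one_le_two)
  have hp0 : p ≠ 0 := (zero_lt_one.trans_le hp).ne'
  set q := p.toReal
  have hq : 1 ≤ q := by simpa using ENNReal.toReal_mono hp_top hp
  have hq0 : 0 < q := by linarith
  simp only [eLpNorm_eq_lintegral_rpow_enorm_toReal hp0 hp_top]
  calc (∫⁻ x in K, ‖u x - ⨍ y in K, u y ∂μ‖ₑ ^ q ∂μ) ^ (1 / q)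
      ≤ (2 ^ finrank ℝ E * D ^ q * ∫⁻ z in K, ‖fderiv ℝ u z‖ₑ ^ q ∂μ) ^ (1 / q) := by
        gcongr
        exact setLIntegral_enorm_sub_setAverage_rpow_le hK hKc h0 hU hKU hu hq
    _ = (2 : ℝ≥0∞) ^ ((finrank ℝ E : ℝ) / q) * D *
          (∫⁻ z in K, ‖fderiv ℝ u z‖ₑ ^ q ∂μ) ^ (1 / q) := by
        rw [ENNReal.mul_rpow_of_nonneg _ _ (by positivity),
          ENNReal.mul_rpow_of_nonneg _ _ (by positivity), ← ENNReal.rpow_mul,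
          mul_one_div_cancel hq0.ne', ENNReal.rpow_one, ← ENNReal.rpow_natCast, ← ENNReal.rpow_mul,
          mul_one_div]
    _ ≤ 2 ^ finrank ℝ E * D * (∫⁻ z in K, ‖fderiv ℝ u z‖ₑ ^ q ∂μ) ^ (1 / q) := by
        gcongr
        rw [← ENNReal.rpow_natCast]
        exact ENNReal.rpow_le_rpow_of_exponent_le one_le_two (div_le_self (by positivity) hq)

end Haar

theorem ContDiffAt.fderiv_fderiv_apply_comm {F : Type*} [NormedAddCommGroup F] [NormedSpace ℝ F]
    {v : E → F} {z : E} (hv : ContDiffAt ℝ 2 v z) (x y : E) :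
    fderiv ℝ (fun w => fderiv ℝ v w x) z y = fderiv ℝ (fun w => fderiv ℝ v w y) z x := by
  have hdiff : DifferentiableAt ℝ (fderiv ℝ v) z :=
    (hv.fderiv_right (m := 1) le_rfl).differentiableAt one_ne_zero
  rw [fderiv_clm_apply hdiff (differentiableAt_const _),
    fderiv_clm_apply hdiff (differentiableAt_const _)]
  simpa using hv.isSymmSndFDerivAt (by simp) y x

theorem ContinuousLinearMap.opNorm_le_norm_apply_add_norm_apply {F : Type*}
    [NormedAddCommGroup F] [NormedSpace ℝ F] (L : ℝ × ℝ →L[ℝ] F) :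
    ‖L‖ ≤ ‖L (1, 0)‖ + ‖L (0, 1)‖ := by
  refine L.opNorm_le_bound (by positivity) fun w => ?_
  have hw : w = w.1 • ((1 : ℝ), (0 : ℝ)) + w.2 • ((0 : ℝ), (1 : ℝ)) := by ext <;> simp
  calc ‖L w‖ = ‖w.1 • L (1, 0) + w.2 • L (0, 1)‖ := by
        conv_lhs => rw [hw]
        simp only [map_add, map_smul]
    _ ≤ ‖w.1‖ * ‖L (1, 0)‖ + ‖w.2‖ * ‖L (0, 1)‖ := by
        refine (norm_add_le _ _).trans_eq ?_
        rw [norm_smul, norm_smul]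
    _ ≤ ‖w‖ * ‖L (1, 0)‖ + ‖w‖ * ‖L (0, 1)‖ := by
        gcongr
        exacts [_root_.norm_fst_le w, _root_.norm_snd_le w]
    _ = (‖L (1, 0)‖ + ‖L (0, 1)‖) * ‖w‖ := by ring

theorem PiLp.norm_toLp_le_sum_norm {ι G : Type*} [Fintype ι] [NormedAddCommGroup G] {p : ℝ≥0∞}
    [Fact (1 ≤ p)] (x : ι → G) : ‖(WithLp.equiv p (ι → G)).symm x‖ ≤ ∑ i, ‖x i‖ := by
  classical
  have hx : (WithLp.equiv p (ι → G)).symm x = ∑ i, PiLp.single p i (x i) := by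
    ext j
    simp [Pi.single_apply]
  rw [hx]
  exact (norm_sum_le _ _).trans_eq (by simp [PiLp.norm_single])

theorem eLpNorm_toLp_le_sum {α ι G : Type*} [MeasurableSpace α] {μ : Measure α} [Fintype ι]
    [NormedAddCommGroup G] {p : ℝ≥0∞} [Fact (1 ≤ p)] {f : α → ι → G}
    (hf : ∀ i, AEStronglyMeasurable (fun a => f a i) μ) :
    eLpNorm (fun a => (WithLp.equiv p (ι → G)).symm (f a)) p μ
      ≤ ∑ i, eLpNorm (fun a => f a i) p μ :=
  calc eLpNorm (fun a => (WithLp.equiv p (ι → G)).symm (f a)) p μ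
      ≤ eLpNorm (∑ i, fun a => ‖f a i‖) p μ :=
        eLpNorm_mono_real fun a => (PiLp.norm_toLp_le_sum_norm (f a)).trans_eq (by simp)
    _ ≤ ∑ i, eLpNorm (fun a => ‖f a i‖) p μ :=
        eLpNorm_sum_le (fun i _ => (hf i).norm) Fact.out
    _ = ∑ i, eLpNorm (fun a => f a i) p μ := by simp only [eLpNorm_norm]

section Plane

variable {p : ℝ≥0∞} [Fact (1 ≤ p)] {v : ℝ × ℝ → ℝ}

variable (p v) in
/-- `(∂₁₁v, ∂₁₂v, ∂₂₂v)(z)` in `ℓᵖ`; its `Lᵖ(K)` norm is the seminorm `|v|_{2,p,K}`. -/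
noncomputable def secondPartials (z : ℝ × ℝ) : WithLp p (Fin 3 → ℝ) :=
  (WithLp.equiv p (Fin 3 → ℝ)).symm
    ![fderiv ℝ (fun w => fderiv ℝ v w (1, 0)) z (1, 0),
      fderiv ℝ (fun w => fderiv ℝ v w (1, 0)) z (0, 1),
      fderiv ℝ (fun w => fderiv ℝ v w (0, 1)) z (0, 1)]

theorem norm_fderiv_fderiv_apply_one_zero_le (z : ℝ × ℝ) :
    ‖fderiv ℝ (fun w => fderiv ℝ v w (1, 0)) z‖ ≤ 2 * ‖secondPartials p v z‖ := by
  have h₀ : ‖fderiv ℝ (fun w => fderiv ℝ v w (1, 0)) z (1, 0)‖ ≤ ‖secondPartials p v z‖ :=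
    PiLp.norm_apply_le (secondPartials p v z) 0
  have h₁ : ‖fderiv ℝ (fun w => fderiv ℝ v w (1, 0)) z (0, 1)‖ ≤ ‖secondPartials p v z‖ :=
    PiLp.norm_apply_le (secondPartials p v z) 1
  linarith [ContinuousLinearMap.opNorm_le_norm_apply_add_norm_apply
    (fderiv ℝ (fun w => fderiv ℝ v w (1, 0)) z)]

theorem ContDiffAt.norm_fderiv_fderiv_apply_zero_one_le {z : ℝ × ℝ} (hv : ContDiffAt ℝ 2 v z) :
    ‖fderiv ℝ (fun w => fderiv ℝ v w (0, 1)) z‖ ≤ 2 * ‖secondPartials p v z‖ := by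
  have h₁ : ‖fderiv ℝ (fun w => fderiv ℝ v w (0, 1)) z (1, 0)‖ ≤ ‖secondPartials p v z‖ :=
    hv.fderiv_fderiv_apply_comm (0, 1) (1, 0) ▸ PiLp.norm_apply_le (secondPartials p v z) 1
  have h₂ : ‖fderiv ℝ (fun w => fderiv ℝ v w (0, 1)) z (0, 1)‖ ≤ ‖secondPartials p v z‖ :=
    PiLp.norm_apply_le (secondPartials p v z) 2
  linarith [ContinuousLinearMap.opNorm_le_norm_apply_add_norm_apply
    (fderiv ℝ (fun w => fderiv ℝ v w (0, 1)) z)]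

theorem eLpNorm_fderiv_apply_sub_setAverage_le {K U : Set (ℝ × ℝ)} (hK : Convex ℝ K)
    (hKc : IsCompact K) (hU : IsOpen U) (hKU : K ⊆ U) (hv : ContDiffOn ℝ 2 v U) {e : ℝ × ℝ}
    (he : e = (1, 0) ∨ e = (0, 1)) :
    eLpNorm (fun z => fderiv ℝ v z e - ⨍ y in K, fderiv ℝ v y e) p (volume.restrict K)
      ≤ 8 * ENNReal.ofReal (Metric.diam K) *
          eLpNorm (secondPartials p v) p (volume.restrict K) := by
  set D := ENNReal.ofReal (Metric.diam K)
  have hgrad : ∀ z ∈ K,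
      ‖fderiv ℝ (fun w => fderiv ℝ v w e) z‖₊ ≤ 2 * ‖secondPartials p v z‖₊ := by
    intro z hz
    rw [← NNReal.coe_le_coe]
    rcases he with rfl | rfl
    exacts [norm_fderiv_fderiv_apply_one_zero_le z,
      (hv.contDiffAt (hU.mem_nhds (hKU hz))).norm_fderiv_fderiv_apply_zero_one_le]
  have hv' : ContDiffOn ℝ 1 (fun w => fderiv ℝ v w e) U :=
    (hv.fderiv_of_isOpen hU (by norm_num)).clm_apply contDiffOn_const
  calc eLpNorm (fun z => fderiv ℝ v z e - ⨍ y in K, fderiv ℝ v y e) p (volume.restrict K)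
      ≤ 2 ^ finrank ℝ (ℝ × ℝ) * D *
          eLpNorm (fderiv ℝ fun w => fderiv ℝ v w e) p (volume.restrict K) :=
        eLpNorm_sub_setAverage_le hK hKc hU hKU hv' Fact.out
    _ ≤ 4 * D * ((2 : ℝ≥0) • eLpNorm (secondPartials p v) p (volume.restrict K)) := by
        rw [finrank_prod, finrank_self]
        gcongr
        · norm_num
        · exact eLpNorm_le_nnreal_smul_eLpNorm_of_ae_le_mul
            ((ae_restrict_iff' hKc.measurableSet).2 (ae_of_all _ hgrad)) p
    _ = 8 * D * eLpNorm (secondPartials p v) p (volume.restrict K) := by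
        rw [ENNReal.smul_def]
        push_cast
        ring

end Plane

/-- Shape-independent first-order error estimate for Crouzeix–Raviart interpolation:
there is `C = C(p)` such that for every triangle `K` with diameter `h_K` and every
`v ∈ W^{2,p}(K)`, `|v - I_K^{CR} v|_{1,p,K} ≤ C h_K |v|_{2,p,K}`.  The gradient of
`I_K^{CR} v` is the mean value `(gx, gy)` of `∇v` over `K`, and seminorms are `L^p` norms
of the vector of first (resp. second) derivatives viewed in `ℓ^p`. -/
theorem crouzeixRaviart_error_first_order (p : ℝ≥0∞) [Fact (1 ≤ p)] :
    ∃ C : ℝ≥0, ∀ (a b c : ℝ × ℝ), AffineIndependent ℝ ![a, b, c] →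
      ∀ (K : Set (ℝ × ℝ)), K = convexHull ℝ {a, b, c} →
      ∀ (v : ℝ × ℝ → ℝ) (U : Set (ℝ × ℝ)), IsOpen U → K ⊆ U →
        ContDiffOn ℝ 2 v U →
        ∀ gx gy : ℝ,
          gx = (volume K).toReal⁻¹ * ∫ z in K, fderiv ℝ v z (1, 0) →
          gy = (volume K).toReal⁻¹ * ∫ z in K, fderiv ℝ v z (0, 1) →
          eLpNorm (fun z => (WithLp.equiv p (Fin 2 → ℝ)).symm
              ![fderiv ℝ v z (1, 0) - gx, fderiv ℝ v z (0, 1) - gy]) p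
              (volume.restrict K) ≤
            (C : ℝ≥0∞) * ENNReal.ofReal (Metric.diam K) *
              eLpNorm (fun z => (WithLp.equiv p (Fin 3 → ℝ)).symm
                ![fderiv ℝ (fun w => fderiv ℝ v w (1, 0)) z (1, 0),
                  fderiv ℝ (fun w => fderiv ℝ v w (1, 0)) z (0, 1),
                  fderiv ℝ (fun w => fderiv ℝ v w (0, 1)) z (0, 1)]) p
                (volume.restrict K) := by
  refine ⟨16, fun a b c _ K hK v U hU hKU hv gx gy hgx hgy => ?_⟩
  have hKc : IsCompact K := hK ▸ (toFinite _).isCompact_convexHull (𝕜 := ℝ)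
  have hPW := fun e he => eLpNorm_fderiv_apply_sub_setAverage_le (p := p)
    (hK ▸ convex_convexHull ℝ _) hKc hU hKU hv (e := e) he
  have h₁ := hPW _ (.inl rfl)
  have h₂ := hPW _ (.inr rfl)
  simp only [setAverage_eq, smul_eq_mul, measureReal_def, ← hgx, ← hgy] at h₁ h₂
  set N := eLpNorm (secondPartials p v) p (volume.restrict K)
  calc _ ≤ eLpNorm (fun z => fderiv ℝ v z (1, 0) - gx) p (volume.restrict K)
          + eLpNorm (fun z => fderiv ℝ v z (0, 1) - gy) p (volume.restrict K) := by
        simpa [Fin.sum_univ_two] using eLpNorm_toLp_le_sum (p := p)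
          (f := fun z => ![fderiv ℝ v z (1, 0) - gx, fderiv ℝ v z (0, 1) - gy]) fun i => by
            fin_cases i <;>
              exact ((measurable_fderiv_apply_const ℝ v _).sub_const _).aestronglyMeasurable
    _ ≤ 8 * ENNReal.ofReal (Metric.diam K) * N + 8 * ENNReal.ofReal (Metric.diam K) * N :=
        add_le_add h₁ h₂
    _ = ((16 : ℝ≥0) : ℝ≥0∞) * ENNReal.ofReal (Metric.diam K) * N := by
        push_cast
        ring
end
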